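/- arXiv:1801.09716 — 2 statements merged into one kernel-verified Lean document; each statement's English description precedes it below -/
import Mathlib

section
/- Let S be an isometry on a complex Hilbert space H. Then H^iso and H^uni are both S-reducing closed subspaces of H, they are mutually orthogonal, and H = H^iso ⊕ H^uni as a Hilbert (orthogonal) direct sum. -/
open ContinuousLinearMap

variable {H : Type*} [NormedAddCommGroup H] [InnerProductSpace ℂ H] [CompleteSpace H]

/-- The purely isometric part `H^iso`: the closed linear span of the subspaces
`S^k (ker S*)`, `k ≥ 0`. -/
noncomputable def Hiso (S : H →L[ℂ] H) : Submodule ℂ H :=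
  (⨆ k : ℕ, Submodule.map ((S ^ k : H →L[ℂ] H) : H →ₗ[ℂ] H) (LinearMap.ker (adjoint S : H →ₗ[ℂ] H))).topologicalClosure

/-- The unitary part `H^uni := ⋂_{k≥0} S^k (H)`. -/
noncomputable def Huni (S : H →L[ℂ] H) : Submodule ℂ H :=
  ⨅ k : ℕ, LinearMap.range ((S ^ k : H →L[ℂ] H) : H →ₗ[ℂ] H)

/-- A closed subspace `L` reduces `S` if it is invariant under `S` and `S*`. -/
def Reduces (S : H →L[ℂ] H) (L : Submodule ℂ H) : Prop :=
  (∀ x ∈ L, S x ∈ L) ∧ ∀ x ∈ L, adjoint S x ∈ L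

/-- `S` is unitary on `L`: `S` maps `L` onto `L`. -/
def UnitaryOn (S : H →L[ℂ] H) (L : Submodule ℂ H) : Prop :=
  Submodule.map (S : H →ₗ[ℂ] H) L = L

/-- `S` is a pure isometry on the `S`-invariant subspace `L`: `{0}` is the only
`S`-invariant closed subspace of `L` on which `S` is unitary. -/
def PureOn (S : H →L[ℂ] H) (L : Submodule ℂ H) : Prop :=
  ∀ M : Submodule ℂ H, IsClosed (M : Set H) → M ≤ L → Submodule.map (S : H →ₗ[ℂ] H) M = M → M = ⊥

/-- `P` is the orthogonal projection of `H` onto the subspace `K`. -/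
def IsOrthoProj (P : H →L[ℂ] H) (K : Submodule ℂ H) : Prop :=
  ∀ x, P x ∈ K ∧ x - P x ∈ Kᗮ

/-! The wandering subspace `W = ker S*` is the orthogonal complement of the closed range of
`S`, and each `S ^ n` is an isometry, so it carries orthogonal complements to relative
orthogonal complements in its range. Hence `range S^(n+1) = range S^n ⊓ (S^n W)ᗮ`, i.e.
`range S^n = (W ⊕ S W ⊕ ⋯ ⊕ S^(n-1) W)ᗮ`, and intersecting over `n` gives
`H^uni = (H^iso)ᗮ`. Since `S` shifts `S^k W` to `S^(k+1) W` and `S*` shifts it back (killing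
`W`), `H^iso` reduces `S`; the rest is the projection theorem. -/

section Isometry

variable {𝕜 E : Type*} [RCLike 𝕜] [NormedAddCommGroup E] [InnerProductSpace 𝕜 E]
  [CompleteSpace E] {S : E →L[𝕜] E}

variable (S) in
noncomputable def wanderingSubspace : Submodule 𝕜 E :=
  LinearMap.ker (adjoint S : E →ₗ[𝕜] E)

lemma adjoint_pow_mul_pow_eq_one (hS : adjoint S * S = 1) (n : ℕ) :
    adjoint (S ^ n) * S ^ n = 1 := by
  rw [← star_eq_adjoint, star_pow, star_eq_adjoint]
  exact pow_mul_pow_eq_one n hS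

lemma map_orthogonal_of_adjoint_mul_self_eq_one (hS : adjoint S * S = 1) (K : Submodule 𝕜 E) :
    Kᗮ.map (S : E →ₗ[𝕜] E) =
      (K.map (S : E →ₗ[𝕜] E))ᗮ ⊓ LinearMap.range (S : E →ₗ[𝕜] E) :=
  K.map_orthogonal (⟨S, (norm_map_iff_adjoint_comp_self S).mpr hS⟩ : E →ₗᵢ[𝕜] E)

lemma orthogonal_wanderingSubspace_eq_range (hS : adjoint S * S = 1) :
    (wanderingSubspace S)ᗮ = LinearMap.range (S : E →ₗ[𝕜] E) := by
  have hclosed : IsClosed (LinearMap.range (S : E →ₗ[𝕜] E) : Set E) :=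
    ((isometry_iff_adjoint_comp_self S).mpr hS).isClosedEmbedding.isClosed_range
  rw [wanderingSubspace, (adjoint S).orthogonal_ker, adjoint_adjoint]
  exact hclosed.submodule_topologicalClosure_eq

lemma range_pow_succ_eq_inf_orthogonal (hS : adjoint S * S = 1) (n : ℕ) :
    LinearMap.range (↑(S ^ (n + 1)) : E →ₗ[𝕜] E) =
      LinearMap.range (↑(S ^ n) : E →ₗ[𝕜] E) ⊓
        ((wanderingSubspace S).map (↑(S ^ n) : E →ₗ[𝕜] E))ᗮ := by
  rw [inf_comm, ← map_orthogonal_of_adjoint_mul_self_eq_one (adjoint_pow_mul_pow_eq_one hS n),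
    orthogonal_wanderingSubspace_eq_range hS, pow_succ, ← LinearMap.range_comp]
  rfl

lemma range_pow_eq_iInf_lt (hS : adjoint S * S = 1) (n : ℕ) :
    LinearMap.range (↑(S ^ n) : E →ₗ[𝕜] E) =
      ⨅ k < n, ((wanderingSubspace S).map (↑(S ^ k) : E →ₗ[𝕜] E))ᗮ := by
  induction n with
  | zero => simp [Module.End.one_eq_id]
  | succ n ih => rw [range_pow_succ_eq_inf_orthogonal hS, ih, Nat.iInf_lt_succ]

lemma iInf_range_pow_eq_orthogonal (hS : adjoint S * S = 1) :
    ⨅ n : ℕ, LinearMap.range (↑(S ^ n) : E →ₗ[𝕜] E) =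
      (⨆ k : ℕ, (wanderingSubspace S).map (↑(S ^ k) : E →ₗ[𝕜] E))ᗮ := by
  simp_rw [range_pow_eq_iInf_lt hS, ← Submodule.iInf_orthogonal]
  exact le_antisymm (le_iInf fun k => iInf_le_of_le (k + 1) (iInf₂_le k k.lt_succ_self))
    (le_iInf fun _ => le_iInf₂ fun k _ => iInf_le _ k)

end Isometry

lemma Reduces.orthogonal {S : H →L[ℂ] H} {L : Submodule ℂ H} (h : Reduces S L) :
    Reduces S Lᗮ :=
  ⟨fun x hx u hu => by rw [← adjoint_inner_left]; exact hx _ (h.2 u hu),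
    fun x hx u hu => by rw [adjoint_inner_right]; exact hx _ (h.1 u hu)⟩

lemma Reduces.topologicalClosure {S : H →L[ℂ] H} {L : Submodule ℂ H} (h : Reduces S L) :
    Reduces S L.topologicalClosure :=
  ⟨fun _ hx => map_mem_closure S.continuous hx h.1,
    fun _ hx => map_mem_closure (adjoint S).continuous hx h.2⟩

lemma reduces_iSup_map_pow_wanderingSubspace {S : H →L[ℂ] H} (hS : adjoint S * S = 1) :
    Reduces S (⨆ k : ℕ, (wanderingSubspace S).map (↑(S ^ k) : H →ₗ[ℂ] H)) := by
  set M := ⨆ k : ℕ, (wanderingSubspace S).map (↑(S ^ k) : H →ₗ[ℂ] H)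
  have hmapS : M.map (S : H →ₗ[ℂ] H) ≤ M := by
    refine (Submodule.map_iSup _ _).trans_le (iSup_le fun k => ?_)
    rw [← Submodule.map_comp]
    exact le_iSup_of_le (k + 1) (by rw [pow_succ']; rfl)
  have hmapSa : M.map (adjoint S : H →ₗ[ℂ] H) ≤ M := by
    refine (Submodule.map_iSup _ _).trans_le (iSup_le fun k => ?_)
    rw [← Submodule.map_comp]
    cases k with
    | zero =>
      rintro _ ⟨w, hw : adjoint S w = 0, rfl⟩
      simp [hw]
    | succ k =>
      have hshift : adjoint S * S ^ (k + 1) = S ^ k := by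
        rw [pow_succ', ← mul_assoc, hS, one_mul]
      exact le_iSup_of_le k (by rw [← hshift]; rfl)
  exact ⟨fun x hx => hmapS (Submodule.mem_map_of_mem hx),
    fun x hx => hmapSa (Submodule.mem_map_of_mem hx)⟩

theorem statement0 (S : H →L[ℂ] H) (hS : adjoint S * S = 1) :
    IsClosed ((Hiso S : Set H)) ∧ IsClosed ((Huni S : Set H)) ∧
    Reduces S (Hiso S) ∧ Reduces S (Huni S) ∧
    Hiso S ≤ (Huni S)ᗮ ∧ Hiso S ⊔ Huni S = ⊤ := by
  have hiso_reduces : Reduces S (Hiso S) :=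
    (reduces_iSup_map_pow_wanderingSubspace hS).topologicalClosure
  have hiso_closed : IsClosed (Hiso S : Set H) := Submodule.isClosed_topologicalClosure _
  have huni : Huni S = (Hiso S)ᗮ := by
    rw [Hiso, Submodule.orthogonal_closure]
    exact iInf_range_pow_eq_orthogonal hS
  have : CompleteSpace (Hiso S) := hiso_closed.completeSpace_coe
  rw [huni]
  exact ⟨hiso_closed, Submodule.isClosed_orthogonal _, hiso_reduces, hiso_reduces.orthogonal,
    Submodule.le_orthogonal_orthogonal _, Submodule.sup_orthogonal_of_hasOrthogonalProjection⟩
end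

section
/- Let (V_1,...,V_n) be an n-tuple of doubly non-commuting isometries on a complex Hilbert space H. Then: the 2n orthogonal projections P_1^iso,...,P_n^iso, P_1^uni,...,P_n^uni pairwise commute and commute with every V_i and every V_i*; for every A ⊆ {1,...,n}, H_A = ⋂_{i∈A} H_i^iso ∩ ⋂_{i∈A^c} H_i^uni; H = ⊕_{A ⊆ {1,...,n}} H_A is a Hilbert (orthogonal) direct sum whose 2^n summands H_A each reduce all V_1,...,V_n; and for every A and every i, the restriction of V_i to H_A is a pure isometry if i ∈ A and is unitary if i ∈ A^c. Furthermore, if L is a closed subspace of H that reduces all V_1,...,V_n and A ⊆ {1,...,n}, then the following are equivalent: (1) V_i restricted to L is a pure isometry for all i ∈ A and is unitary for all i ∈ A^c; (2) L ⊆ H_A; (3) P_L ∘ P_A = P_L, where P_L is the orthogonal projection onto L. -/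
open ContinuousLinearMap

variable {H : Type*} [NormedAddCommGroup H] [InnerProductSpace ℂ H] [CompleteSpace H]

/-- `(V 1, ..., V n)` is an `n`-tuple of doubly non-commuting isometries with structure
constants `z i j`: each `V i` is an isometry (`(V i)* (V i) = 1`) and
`(V i)* (V j) = conj (z i j) • (V j) (V i)*` for all `i ≠ j`. -/
def DoublyNonCommuting {n : ℕ} (z : Fin n → Fin n → ℂ) (V : Fin n → H →L[ℂ] H) : Prop :=
  (∀ i, adjoint (V i) * V i = 1) ∧
    ∀ i j, i ≠ j →
      adjoint (V i) * V j = (starRingEnd ℂ) (z i j) • (V j * adjoint (V i))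

/-- The space `H_A = ⋂_{i ∈ A} H_i^iso ∩ ⋂_{i ∈ Aᶜ} H_i^uni` (the range of the
projection `P_A`). -/
noncomputable def HA {n : ℕ} (V : Fin n → H →L[ℂ] H) (A : Finset (Fin n)) : Submodule ℂ H :=
  (⨅ i ∈ A, Hiso (V i)) ⊓ ⨅ i ∈ Aᶜ, Huni (V i)

/-- The projection `P_A = (∏_{i ∈ A} P_i^iso) (∏_{i ∈ Aᶜ} P_i^uni)`, the factors being
taken in increasing order of the indices (the order is immaterial by the theorem). -/
noncomputable def PA {n : ℕ} (Piso Puni : Fin n → H →L[ℂ] H) (A : Finset (Fin n)) :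
    H →L[ℂ] H :=
  ((A.sort (· ≤ ·)).map Piso).prod * ((Aᶜ.sort (· ≤ ·)).map Puni).prod

/-!
Everything rests on the Wold decomposition of a single isometry `S`: `H^uni = ⋂ₖ Sᵏ H` and
`H^iso` are orthogonal complements, because `Sᵏ y ⊥ Sᵏ (ker S*)` iff `y ∈ (ker S*)ᗮ = S H`.
Taking adjoints in the defining relation gives `V_j* V_i = z_ij V_i V_j*`, and `|z_ij| = 1`
upgrades it to `V_i V_j = z_ij V_j V_i`. So `V_j` and `V_j*` map every `V_iᵏ H` into itself and
reduce `H_i^uni`, hence also `H_i^iso`. The projections therefore commute with all `V_j, V_j*`,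
and then with each other; `P_A` projects onto `H_A`, and `∑_A P_A = ∏_i (P_i^iso + P_i^uni) = 1`.
For a closed reducing subspace `L`, `S` is unitary on `L` iff `L ⊆ H^uni`, and pure on `L` iff
`L ⊆ H^iso`; this gives the characterisation of `H_A`.
-/

open scoped InnerProductSpace

lemma mul_pow_eq_smul_pow_mul {R A : Type*} [CommSemiring R] [Semiring A] [Algebra R A]
    {a b : A} {c : R} (h : a * b = c • (b * a)) (k : ℕ) : a * b ^ k = c ^ k • (b ^ k * a) := by
  induction k with
  | zero => simp
  | succ k ih =>
    rw [pow_succ, ← mul_assoc, ih, smul_mul_assoc, mul_assoc, h, mul_smul_comm, smul_smul,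
      ← pow_succ, ← mul_assoc, ← pow_succ]

lemma eq_smul_of_star_mul_eq_smul_one {A : Type*} [CStarAlgebra A] {x y : A} {c : ℂ}
    (hx : star x * x = 1) (hy : star y * y = 1) (hyx : star y * x = c • 1) (hc : ‖c‖ = 1) :
    x = c • y := by
  have hxy : star x * y = star c • 1 := by simpa using congrArg star hyx
  have hcc : star c * c = 1 := by
    rw [RCLike.star_def, Complex.conj_mul', hc]; norm_num
  -- `(x - c • y)⋆ (x - c • y) = 1 - c̄ c = 0`
  rw [← sub_eq_zero, ← CStarRing.star_mul_self_eq_zero_iff]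
  simp only [star_sub, star_smul, sub_mul, mul_sub, smul_mul_assoc, mul_smul_comm, hx, hy, hxy,
    hyx, smul_smul, hcc]
  simp

open scoped IsMulCommutative in
theorem sum_sort_prod_mul_sort_prod_compl_eq_one {R : Type*} [Ring R] {n : ℕ} (p q : Fin n → R)
    (hpp : ∀ i j, Commute (p i) (p j)) (hpq : ∀ i j, Commute (p i) (q j))
    (hqq : ∀ i j, Commute (q i) (q j)) (hsum : ∀ i, p i + q i = 1) :
    ∑ A : Finset (Fin n),
      ((A.sort (· ≤ ·)).map p).prod * ((Aᶜ.sort (· ≤ ·)).map q).prod = 1 := by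
  -- The `p i` and `q i` generate a commutative subring, in which `Finset.prod_add` applies.
  set S := Subring.closure (Set.range p ∪ Set.range q)
  have : IsMulCommutative S := Subring.isMulCommutative_closure (by
    rintro _ (⟨i, rfl⟩ | ⟨i, rfl⟩) _ (⟨j, rfl⟩ | ⟨j, rfl⟩)
    exacts [hpp i j, hpq i j, (hpq j i).symm, hqq i j])
  let p' : Fin n → S := fun i => ⟨p i, Subring.subset_closure (.inl ⟨i, rfl⟩)⟩
  let q' : Fin n → S := fun i => ⟨q i, Subring.subset_closure (.inr ⟨i, rfl⟩)⟩
  have hsort (A : Finset (Fin n)) (f : Fin n → S) :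
      ((A.sort (· ≤ ·)).map (fun i => (f i : R))).prod = ((∏ i ∈ A, f i : S) : R) := by
    rw [Finset.prod_eq_multiset_prod, ← Finset.sort_eq A (· ≤ ·), Multiset.map_coe,
      Multiset.prod_coe, ← S.subtype_apply, map_list_prod, List.map_map]
    rfl
  have key : ∏ i, (p' i + q' i) = 1 := Finset.prod_eq_one fun i _ => Subtype.ext (hsum i)
  rw [Finset.prod_add, Finset.powerset_univ] at key
  simp only [← Finset.compl_eq_univ_sdiff] at key
  calc _ = ((∑ A : Finset (Fin n), (∏ i ∈ A, p' i) * ∏ i ∈ Aᶜ, q' i : S) : R) := by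
        push_cast [← hsort]; rfl
    _ = 1 := by rw [key]; rfl

namespace IsOrthoProj

section

variable {E : Type*} [NormedAddCommGroup E] [InnerProductSpace ℂ E] {P Q : E →L[ℂ] E}
  {K : Submodule ℂ E}

lemma apply_eq_self (hP : IsOrthoProj P K) {x : E} (hx : x ∈ K) : P x = x := by
  have h : x - P x ∈ K ⊓ Kᗮ := ⟨K.sub_mem hx (hP x).1, (hP x).2⟩
  rw [K.inf_orthogonal_eq_bot, Submodule.mem_bot, sub_eq_zero] at h
  exact h.symm

lemma apply_eq_zero (hP : IsOrthoProj P K) {x : E} (hx : x ∈ Kᗮ) : P x = 0 := by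
  have h : P x ∈ K ⊓ Kᗮ := ⟨(hP x).1, by simpa using Kᗮ.sub_mem hx (hP x).2⟩
  rwa [K.inf_orthogonal_eq_bot, Submodule.mem_bot] at h

lemma range_eq (hP : IsOrthoProj P K) : LinearMap.range (P : E →ₗ[ℂ] E) = K :=
  le_antisymm (LinearMap.range_le_iff_comap.mpr (eq_top_iff.mpr fun x _ => (hP x).1))
    fun x hx => ⟨x, hP.apply_eq_self hx⟩

lemma add_eq_one (hP : IsOrthoProj P K) (hQ : IsOrthoProj Q Kᗮ) : P + Q = 1 := by
  ext x
  have h := hQ.apply_eq_self (hP x).2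
  rw [map_sub, hQ.apply_eq_zero (K.le_orthogonal_orthogonal (hP x).1), sub_zero] at h
  simp [h]

end

variable {P Q T : H →L[ℂ] H} {K L : Submodule ℂ H}

lemma adjoint_eq (hP : IsOrthoProj P K) : adjoint P = P := by
  refine ((eq_adjoint_iff P P).mpr fun x y => ?_).symm
  have hx : ⟪x - P x, P y⟫_ℂ = 0 := Submodule.inner_left_of_mem_orthogonal (hP y).1 (hP x).2
  have hy : ⟪P x, y - P y⟫_ℂ = 0 := Submodule.inner_right_of_mem_orthogonal (hP x).1 (hP y).2
  rw [inner_sub_left, sub_eq_zero] at hx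
  rw [inner_sub_right, sub_eq_zero] at hy
  rw [hy, hx]

lemma mul (hP : IsOrthoProj P K) (hQ : IsOrthoProj Q L) (hPQ : Commute P Q) :
    IsOrthoProj (P * Q) (K ⊓ L) := by
  intro x
  refine ⟨⟨(hP _).1, hPQ.eq ▸ (hQ _).1⟩, fun u hu => ?_⟩
  calc ⟪u, x - P (Q x)⟫_ℂ = ⟪u, x⟫_ℂ - ⟪Q (P u), x⟫_ℂ := by
        rw [inner_sub_right, ← adjoint_inner_left, ← adjoint_inner_left, hP.adjoint_eq,
          hQ.adjoint_eq]
    _ = 0 := by rw [hP.apply_eq_self hu.1, hQ.apply_eq_self hu.2, sub_self]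

lemma list_prod {ι : Type*} (l : List ι) {P : ι → H →L[ℂ] H} {K : ι → Submodule ℂ H}
    (hP : ∀ i, IsOrthoProj (P i) (K i)) (hc : ∀ i j, Commute (P i) (P j)) :
    IsOrthoProj (l.map P).prod (⨅ i ∈ l, K i) := by
  induction l with
  | nil => intro x; simp
  | cons a l ih =>
    simp only [List.map_cons, List.prod_cons, List.mem_cons, iInf_or, iInf_inf_eq,
      iInf_iInf_eq_left]
    exact (hP a).mul ih (Commute.list_prod_right _ _ fun _ h => by
      obtain ⟨i, -, rfl⟩ := List.mem_map.mp h; exact hc a i)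

lemma commute (hP : IsOrthoProj P K) (hT : Reduces T K) : Commute P T := by
  ext x
  have hx : T (x - P x) ∈ Kᗮ := fun u hu => by
    rw [← adjoint_inner_left]; exact (hP x).2 _ (hT.2 u hu)
  have h := hP.apply_eq_zero hx
  rw [map_sub, map_sub, sub_eq_zero, hP.apply_eq_self (hT.1 _ (hP x).1)] at h
  exact h

lemma le_iff_mul_eq (hP : IsOrthoProj P K) (hQ : IsOrthoProj Q L) : L ≤ K ↔ Q * P = Q := by
  refine ⟨fun hLK => ?_, fun h x hx => ?_⟩
  · ext x
    have h := hQ.apply_eq_zero (Submodule.orthogonal_le hLK (hP x).2)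
    rwa [map_sub, sub_eq_zero, eq_comm] at h
  · have h' : P * Q = Q := by
      simpa only [star_mul, star_eq_adjoint, hP.adjoint_eq, hQ.adjoint_eq] using congrArg star h
    rw [← hQ.apply_eq_self hx, ← h']
    exact (hP _).1

end IsOrthoProj

lemma exists_isOrthoProj {K : Submodule ℂ H} (hK : IsClosed (K : Set H)) :
    ∃ P, IsOrthoProj P K :=
  have : CompleteSpace K := completeSpace_coe_iff_isComplete.mpr hK.isComplete
  ⟨K.starProjection, fun x => ⟨K.starProjection_apply_mem x, K.sub_starProjection_mem_orthogonal x⟩⟩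

namespace Reduces

variable {T : H →L[ℂ] H} {K : Submodule ℂ H}

lemma adjoint (h : Reduces T K) : Reduces (adjoint T) K :=
  ⟨h.2, by simpa only [adjoint_adjoint] using h.1⟩

lemma orthogonal_s11 (h : Reduces T K) : Reduces T Kᗮ := by
  refine ⟨fun x hx u hu => ?_, fun x hx u hu => ?_⟩
  · rw [← adjoint_inner_left]; exact hx _ (h.2 u hu)
  · rw [adjoint_inner_right]; exact hx _ (h.1 u hu)

lemma inf {L : Submodule ℂ H} (hK : Reduces T K) (hL : Reduces T L) : Reduces T (K ⊓ L) :=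
  ⟨fun x hx => ⟨hK.1 x hx.1, hL.1 x hx.2⟩, fun x hx => ⟨hK.2 x hx.1, hL.2 x hx.2⟩⟩

lemma iInf {ι : Sort*} {K : ι → Submodule ℂ H} (h : ∀ i, Reduces T (K i)) :
    Reduces T (⨅ i, K i) := by
  simp only [Reduces, Submodule.mem_iInf]
  exact ⟨fun x hx i => (h i).1 x (hx i), fun x hx i => (h i).2 x (hx i)⟩

end Reduces

lemma isOrthoProj_PA {n : ℕ} {Piso Puni : Fin n → H →L[ℂ] H} {K M : Fin n → Submodule ℂ H}
    (hPiso : ∀ i, IsOrthoProj (Piso i) (K i)) (hPuni : ∀ i, IsOrthoProj (Puni i) (M i))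
    (hpp : ∀ i j, Commute (Piso i) (Piso j)) (hpq : ∀ i j, Commute (Piso i) (Puni j))
    (hqq : ∀ i j, Commute (Puni i) (Puni j)) (A : Finset (Fin n)) :
    IsOrthoProj (PA Piso Puni A) ((⨅ i ∈ A, K i) ⊓ ⨅ i ∈ Aᶜ, M i) := by
  have hsort (B : Finset (Fin n)) (N : Fin n → Submodule ℂ H) :
      ⨅ i ∈ B.sort (· ≤ ·), N i = ⨅ i ∈ B, N i := by
    simp only [Finset.mem_sort]
  rw [← hsort A, ← hsort Aᶜ]
  refine (IsOrthoProj.list_prod _ hPiso hpp).mul (IsOrthoProj.list_prod _ hPuni hqq) ?_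
  refine Commute.list_prod_left _ _ fun _ hp => Commute.list_prod_right _ _ fun _ hq => ?_
  obtain ⟨i, -, rfl⟩ := List.mem_map.mp hp
  obtain ⟨j, -, rfl⟩ := List.mem_map.mp hq
  exact hpq i j

section

variable {E : Type*} [NormedAddCommGroup E] [InnerProductSpace ℂ E] {S T : E →L[ℂ] E}

lemma iSup_eq_top_of_sum_eq_one {ι : Type*} [Fintype ι] {P : ι → E →L[ℂ] E}
    {K : ι → Submodule ℂ E} (hP : ∀ i x, P i x ∈ K i) (h : ∑ i, P i = 1) : ⨆ i, K i = ⊤ := by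
  refine eq_top_iff.mpr fun x _ => ?_
  rw [← one_apply_eq_self (F := E →L[ℂ] E) x, ← h, sum_apply]
  exact Submodule.sum_mem _ fun i _ => Submodule.mem_iSup_of_mem i (hP i x)

lemma mem_Huni_iff {x : E} : x ∈ Huni S ↔ ∀ k, ∃ y, (S ^ k) y = x := by
  simp [Huni, Submodule.mem_iInf, Module.End.coe_pow]

lemma apply_mem_Huni_of_mul_eq_smul {c : ℂ} (h : T * S = c • (S * T)) {x : E} (hx : x ∈ Huni S) :
    T x ∈ Huni S := by
  rw [mem_Huni_iff] at hx ⊢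
  intro k
  obtain ⟨y, rfl⟩ := hx k
  exact ⟨c ^ k • T y, by
    simpa using (congrArg (· y) (mul_pow_eq_smul_pow_mul h k)).symm⟩

lemma le_Huni_of_unitaryOn {M : Submodule ℂ E} (h : UnitaryOn S M) : M ≤ Huni S := by
  suffices ∀ k, ∀ x ∈ M, ∃ y, (S ^ k) y = x from fun x hx => mem_Huni_iff.mpr fun k => this k x hx
  intro k
  induction k with
  | zero => exact fun x _ => ⟨x, rfl⟩
  | succ k ih =>
    intro x hx
    obtain ⟨w, hw, rfl⟩ := (h.symm ▸ hx : x ∈ M.map (S : E →ₗ[ℂ] E))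
    obtain ⟨y, rfl⟩ := ih w hw
    exact ⟨y, by rw [pow_succ']; rfl⟩

end

section

variable {S T : H →L[ℂ] H}

lemma reduces_Huni_of_commute (h : Commute T S) (h' : Commute (adjoint T) S) :
    Reduces T (Huni S) :=
  ⟨fun _ => apply_mem_Huni_of_mul_eq_smul (c := 1) (by simpa using h.eq),
    fun _ => apply_mem_Huni_of_mul_eq_smul (c := 1) (by simpa using h'.eq)⟩

lemma IsOrthoProj.reduces_Huni {P : H →L[ℂ] H} {K : Submodule ℂ H} (hP : IsOrthoProj P K)
    (h : Commute P S) : Reduces P (Huni S) :=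
  reduces_Huni_of_commute h (by rwa [hP.adjoint_eq])

lemma isClosed_Hiso : IsClosed (Hiso S : Set H) :=
  Submodule.isClosed_topologicalClosure _

end

section Isometry

variable {S : H →L[ℂ] H} (hS : adjoint S * S = 1)
include hS

lemma adjoint_pow_mul_pow (k : ℕ) : adjoint (S ^ k) * S ^ k = 1 := by
  induction k with
  | zero => simp [← star_eq_adjoint]
  | succ k ih =>
    rw [pow_succ, ← star_eq_adjoint, star_mul, star_eq_adjoint, star_eq_adjoint, mul_assoc,
      ← mul_assoc _ (S ^ k), ih, one_mul, hS]

lemma inner_pow_apply_pow_apply (k : ℕ) (x y : H) : ⟪(S ^ k) x, (S ^ k) y⟫_ℂ = ⟪x, y⟫_ℂ := by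
  rw [← adjoint_inner_right, ← mul_apply_eq_comp, adjoint_pow_mul_pow hS, one_apply_eq_self]

lemma isClosed_range_pow (k : ℕ) :
    IsClosed (LinearMap.range ((S ^ k : H →L[ℂ] H) : H →ₗ[ℂ] H) : Set H) := by
  have : Isometry (S ^ k) := AddMonoidHomClass.isometry_of_norm _ fun x => by
    rw [norm_eq_sqrt_re_inner (𝕜 := ℂ), inner_pow_apply_pow_apply hS, ← norm_eq_sqrt_re_inner]
  rw [LinearMap.coe_range, ContinuousLinearMap.coe_coe]
  exact this.isClosedEmbedding.isClosed_range

lemma isClosed_Huni : IsClosed (Huni S : Set H) := by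
  simpa [Huni] using isClosed_iInter (isClosed_range_pow hS)

lemma reduces_Huni : Reduces S (Huni S) := by
  refine ⟨fun _ => apply_mem_Huni_of_mul_eq_smul (c := 1) (by simp), fun x hx => ?_⟩
  refine mem_Huni_iff.mpr fun k => ?_
  obtain ⟨y, rfl⟩ := mem_Huni_iff.mp hx (k + 1)
  exact ⟨y, by rw [pow_succ', mul_apply_eq_comp, ← mul_apply_eq_comp, hS, one_apply_eq_self]⟩

lemma pow_apply_mem_orthogonal_iff (k : ℕ) (y : H) :
    (S ^ k) y ∈ ((LinearMap.ker (adjoint S : H →ₗ[ℂ] H)).map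
      ((S ^ k : H →L[ℂ] H) : H →ₗ[ℂ] H))ᗮ ↔ y ∈ LinearMap.range (S : H →ₗ[ℂ] H) := by
  have hrange : (LinearMap.ker (adjoint S : H →ₗ[ℂ] H))ᗮ = LinearMap.range (S : H →ₗ[ℂ] H) := by
    have h := isClosed_range_pow hS 1
    rw [pow_one] at h
    rw [← h.submodule_topologicalClosure_eq]
    simpa using (adjoint S).orthogonal_ker
  simp only [← hrange, Submodule.mem_orthogonal, Submodule.mem_map, forall_exists_index, and_imp,
    forall_apply_eq_imp_iff₂, ContinuousLinearMap.coe_coe, inner_pow_apply_pow_apply hS]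

lemma orthogonal_Hiso : (Hiso S)ᗮ = Huni S := by
  rw [Hiso, Submodule.orthogonal_closure, ← Submodule.iInf_orthogonal]
  ext x
  simp only [Submodule.mem_iInf, mem_Huni_iff]
  refine ⟨fun hx k => ?_, fun hx k => ?_⟩
  · induction k with
    | zero => exact ⟨x, rfl⟩
    | succ k ih =>
      obtain ⟨y, rfl⟩ := ih
      obtain ⟨w, rfl⟩ := (pow_apply_mem_orthogonal_iff hS k y).mp (hx k)
      exact ⟨w, by rw [pow_succ]; rfl⟩
  · obtain ⟨w, rfl⟩ := hx (k + 1)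
    rw [pow_succ]
    exact (pow_apply_mem_orthogonal_iff hS k (S w)).mpr ⟨w, rfl⟩

lemma orthogonal_Huni : (Huni S)ᗮ = Hiso S := by
  rw [← orthogonal_Hiso hS, Submodule.orthogonal_orthogonal_eq_closure,
    isClosed_Hiso.submodule_topologicalClosure_eq]

lemma unitaryOn_iff_le_Huni {L : Submodule ℂ H} (hL : Reduces S L) :
    UnitaryOn S L ↔ L ≤ Huni S := by
  refine ⟨le_Huni_of_unitaryOn, fun hle => le_antisymm
    (Submodule.map_le_iff_le_comap.mpr fun x hx => hL.1 x hx) fun x hx => ?_⟩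
  obtain ⟨w, rfl⟩ := mem_Huni_iff.mp (hle hx) 1
  refine ⟨adjoint S ((S ^ 1) w), hL.2 _ hx, ?_⟩
  simp [← mul_apply_eq_comp, hS]

lemma pureOn_iff_le_Hiso {L : Submodule ℂ H} (hLc : IsClosed (L : Set H)) (hL : Reduces S L) :
    PureOn S L ↔ L ≤ Hiso S := by
  refine ⟨fun hpure x hx => ?_, fun hle M _ hML hM => eq_bot_iff.mpr ?_⟩
  · obtain ⟨PL, hPL⟩ := exists_isOrthoProj hLc
    obtain ⟨Q, hQ⟩ := exists_isOrthoProj (isClosed_Huni hS)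
    -- `Q` commutes with `PL`, so it maps `L` into `L ⊓ Huni S`, on which `S` is unitary.
    have hQx : Q x ∈ L := by
      rw [← hPL.apply_eq_self hx, ← mul_apply_eq_comp,
        (hQ.commute (hPL.reduces_Huni (hPL.commute hL))).eq]
      exact (hPL _).1
    have hM : L ⊓ Huni S = ⊥ :=
      hpure _ (hLc.inter (isClosed_Huni hS)) inf_le_left
        ((unitaryOn_iff_le_Huni hS (hL.inf (reduces_Huni hS))).mpr inf_le_right)
    have hQx0 : Q x ∈ L ⊓ Huni S := ⟨hQx, (hQ x).1⟩
    rw [hM, Submodule.mem_bot] at hQx0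
    simpa [hQx0, orthogonal_Huni hS] using (hQ x).2
  · rw [← (Huni S).inf_orthogonal_eq_bot, orthogonal_Huni hS]
    exact le_inf (le_Huni_of_unitaryOn hM) (hML.trans hle)

lemma IsOrthoProj.reduces_Hiso {P : H →L[ℂ] H} {K : Submodule ℂ H}
    (hP : IsOrthoProj P K) (h : Commute P S) : Reduces P (Hiso S) :=
  orthogonal_Huni hS ▸ (hP.reduces_Huni h).orthogonal_s11

end Isometry

section Tuple

variable {n : ℕ} {V : Fin n → H →L[ℂ] H}

lemma le_HA_iff {A : Finset (Fin n)} {L : Submodule ℂ H} :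
    L ≤ HA V A ↔ (∀ i ∈ A, L ≤ Hiso (V i)) ∧ ∀ i ∉ A, L ≤ Huni (V i) := by
  simp [HA]

lemma HA_le_Hiso {A : Finset (Fin n)} {i : Fin n} (hi : i ∈ A) : HA V A ≤ Hiso (V i) :=
  (le_HA_iff.mp le_rfl).1 i hi

lemma HA_le_Huni {A : Finset (Fin n)} {i : Fin n} (hi : i ∉ A) : HA V A ≤ Huni (V i) :=
  (le_HA_iff.mp le_rfl).2 i hi

variable (hV : ∀ i, adjoint (V i) * V i = 1)
include hV

lemma isClosed_HA (A : Finset (Fin n)) : IsClosed (HA V A : Set H) := by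
  simp only [HA, Submodule.coe_inf, Submodule.coe_iInf]
  exact (isClosed_biInter fun i _ => isClosed_Hiso).inter
    (isClosed_biInter fun i _ => isClosed_Huni (hV i))

lemma HA_le_orthogonal_HA {A B : Finset (Fin n)} (hAB : A ≠ B) : HA V A ≤ (HA V B)ᗮ := by
  obtain ⟨i, hi⟩ : ∃ i, ¬(i ∈ A ↔ i ∈ B) := by
    by_contra! h
    exact hAB (Finset.ext h)
  by_cases hiA : i ∈ A
  · calc HA V A ≤ Hiso (V i) := HA_le_Hiso hiA
      _ = (Huni (V i))ᗮ := (orthogonal_Huni (hV i)).symm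
      _ ≤ (HA V B)ᗮ := Submodule.orthogonal_le (HA_le_Huni (by tauto))
  · calc HA V A ≤ Huni (V i) := HA_le_Huni hiA
      _ = (Hiso (V i))ᗮ := (orthogonal_Hiso (hV i)).symm
      _ ≤ (HA V B)ᗮ := Submodule.orthogonal_le (HA_le_Hiso (by tauto))

lemma pureOn_and_unitaryOn_iff_le_HA {L : Submodule ℂ H} (hLc : IsClosed (L : Set H))
    (hL : ∀ i, Reduces (V i) L) (A : Finset (Fin n)) :
    ((∀ i ∈ A, PureOn (V i) L) ∧ ∀ i ∉ A, UnitaryOn (V i) L) ↔ L ≤ HA V A := by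
  rw [le_HA_iff]
  exact and_congr (forall₂_congr fun i _ => pureOn_iff_le_Hiso (hV i) hLc (hL i))
    (forall₂_congr fun i _ => unitaryOn_iff_le_Huni (hV i) (hL i))

end Tuple

namespace DoublyNonCommuting

variable {n : ℕ} {z : Fin n → Fin n → ℂ} {V : Fin n → H →L[ℂ] H}
  (hV : DoublyNonCommuting z V)
include hV

lemma adjoint_mul_eq_smul {i j : Fin n} (hij : i ≠ j) :
    adjoint (V j) * V i = z i j • (V i * adjoint (V j)) := by
  simpa [← star_eq_adjoint] using congrArg star (hV.2 i j hij)

variable (hz : ∀ i j, i ≠ j → ‖z i j‖ = 1)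
include hz

lemma mul_eq_smul {i j : Fin n} (hij : i ≠ j) : V i * V j = z i j • (V j * V i) := by
  -- `V i * V j` and `V j * V i` are isometries with `(V j * V i)⋆ (V i * V j) = z i j`.
  refine eq_smul_of_star_mul_eq_smul_one ?_ ?_ ?_ (hz i j hij)
  all_goals simp only [star_mul, star_eq_adjoint]
  · rw [mul_assoc, ← mul_assoc (adjoint (V i)), hV.1, one_mul, hV.1]
  · rw [mul_assoc, ← mul_assoc (adjoint (V j)), hV.1, one_mul, hV.1]
  · rw [mul_assoc, ← mul_assoc (adjoint (V j)), hV.adjoint_mul_eq_smul hij, smul_mul_assoc,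
      mul_smul_comm, mul_assoc, ← mul_assoc (adjoint (V i)), hV.1, one_mul, hV.1]

lemma reduces_Huni (i j : Fin n) : Reduces (V j) (Huni (V i)) := by
  obtain rfl | hij := eq_or_ne i j
  · exact _root_.reduces_Huni (hV.1 i)
  · exact ⟨fun _ => apply_mem_Huni_of_mul_eq_smul (hV.mul_eq_smul hz hij.symm),
      fun _ => apply_mem_Huni_of_mul_eq_smul (hV.adjoint_mul_eq_smul hij)⟩

lemma reduces_Hiso (i j : Fin n) : Reduces (V j) (Hiso (V i)) :=
  orthogonal_Huni (hV.1 i) ▸ (hV.reduces_Huni hz i j).orthogonal_s11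

lemma reduces_HA (A : Finset (Fin n)) (j : Fin n) : Reduces (V j) (HA V A) :=
  (Reduces.iInf fun i => .iInf fun _ => hV.reduces_Hiso hz i j).inf
    (.iInf fun i => .iInf fun _ => hV.reduces_Huni hz i j)

lemma pureOn_and_unitaryOn_HA (A : Finset (Fin n)) :
    (∀ i ∈ A, PureOn (V i) (HA V A)) ∧ ∀ i ∉ A, UnitaryOn (V i) (HA V A) :=
  (pureOn_and_unitaryOn_iff_le_HA hV.1 (isClosed_HA hV.1 A) (hV.reduces_HA hz A) A).mpr le_rfl

end DoublyNonCommuting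

theorem statement11_general {n : ℕ} (z : Fin n → Fin n → ℂ)
    (hz1 : ∀ i j, i ≠ j → ‖z i j‖ = 1)
    (V : Fin n → H →L[ℂ] H) (hV : DoublyNonCommuting z V)
    (Piso Puni : Fin n → H →L[ℂ] H)
    (hPiso : ∀ i, IsOrthoProj (Piso i) (Hiso (V i)))
    (hPuni : ∀ i, IsOrthoProj (Puni i) (Huni (V i))) :
    (∀ i j, Commute (Piso i) (Piso j) ∧ Commute (Piso i) (Puni j) ∧
        Commute (Puni i) (Puni j)) ∧
    (∀ i j, Commute (Piso i) (V j) ∧ Commute (Piso i) (adjoint (V j)) ∧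
        Commute (Puni i) (V j) ∧ Commute (Puni i) (adjoint (V j))) ∧
    (∀ A : Finset (Fin n), LinearMap.range (PA Piso Puni A : H →ₗ[ℂ] H) = HA V A) ∧
    (∀ A B : Finset (Fin n), A ≠ B → HA V A ≤ (HA V B)ᗮ) ∧
    (⨆ A : Finset (Fin n), HA V A) = ⊤ ∧
    (∀ (A : Finset (Fin n)) (i : Fin n), Reduces (V i) (HA V A)) ∧
    (∀ A : Finset (Fin n), ∀ i ∈ A, PureOn (V i) (HA V A)) ∧
    (∀ A : Finset (Fin n), ∀ i ∉ A, UnitaryOn (V i) (HA V A)) ∧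
    (∀ L : Submodule ℂ H, IsClosed (L : Set H) → (∀ i, Reduces (V i) L) →
      ∀ A : Finset (Fin n), ∀ PL : H →L[ℂ] H, IsOrthoProj PL L →
        [(∀ i ∈ A, PureOn (V i) L) ∧ ∀ i ∉ A, UnitaryOn (V i) L,
          L ≤ HA V A,
          PL * PA Piso Puni A = PL].TFAE) := by
  have hPisoV (i j : Fin n) : Commute (Piso i) (V j) := (hPiso i).commute (hV.reduces_Hiso hz1 i j)
  have hPuniV (i j : Fin n) : Commute (Puni i) (V j) := (hPuni i).commute (hV.reduces_Huni hz1 i j)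
  have hpp (i j : Fin n) : Commute (Piso i) (Piso j) :=
    (hPiso i).commute ((hPiso j).reduces_Hiso (hV.1 i) (hPisoV j i))
  have hpq (i j : Fin n) : Commute (Piso i) (Puni j) :=
    (hPiso i).commute ((hPuni j).reduces_Hiso (hV.1 i) (hPuniV j i))
  have hqq (i j : Fin n) : Commute (Puni i) (Puni j) :=
    (hPuni i).commute ((hPuni j).reduces_Huni (hPuniV j i))
  have hPA : ∀ A, IsOrthoProj (PA Piso Puni A) (HA V A) :=
    isOrthoProj_PA hPiso hPuni hpp hpq hqq
  have hsum : ∑ A, PA Piso Puni A = 1 :=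
    sum_sort_prod_mul_sort_prod_compl_eq_one Piso Puni hpp hpq hqq fun i =>
      (hPiso i).add_eq_one (orthogonal_Hiso (hV.1 i) ▸ hPuni i)
  refine ⟨fun i j => ⟨hpp i j, hpq i j, hqq i j⟩,
    fun i j => ⟨hPisoV i j, (hPiso i).commute (hV.reduces_Hiso hz1 i j).adjoint, hPuniV i j,
      (hPuni i).commute (hV.reduces_Huni hz1 i j).adjoint⟩,
    fun A => (hPA A).range_eq, fun A B => HA_le_orthogonal_HA hV.1,
    iSup_eq_top_of_sum_eq_one (fun A x => (hPA A x).1) hsum, hV.reduces_HA hz1,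
    fun A => (hV.pureOn_and_unitaryOn_HA hz1 A).1, fun A => (hV.pureOn_and_unitaryOn_HA hz1 A).2,
    fun L hLc hL A PL hPL => ?_⟩
  tfae_have 1 ↔ 2 := pureOn_and_unitaryOn_iff_le_HA hV.1 hLc hL A
  tfae_have 2 ↔ 3 := (hPA A).le_iff_mul_eq hPL
  tfae_finish

theorem statement11 {n : ℕ} (hn : 1 ≤ n) (z : Fin n → Fin n → ℂ)
    (hz1 : ∀ i j, i ≠ j → ‖z i j‖ = 1)
    (hz2 : ∀ i j, i ≠ j → z j i = (starRingEnd ℂ) (z i j))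
    (V : Fin n → H →L[ℂ] H) (hV : DoublyNonCommuting z V)
    (Piso Puni : Fin n → H →L[ℂ] H)
    (hPiso : ∀ i, IsOrthoProj (Piso i) (Hiso (V i)))
    (hPuni : ∀ i, IsOrthoProj (Puni i) (Huni (V i))) :
    (∀ i j, Commute (Piso i) (Piso j) ∧ Commute (Piso i) (Puni j) ∧
        Commute (Puni i) (Puni j)) ∧
    (∀ i j, Commute (Piso i) (V j) ∧ Commute (Piso i) (adjoint (V j)) ∧
        Commute (Puni i) (V j) ∧ Commute (Puni i) (adjoint (V j))) ∧
    (∀ A : Finset (Fin n), LinearMap.range (PA Piso Puni A : H →ₗ[ℂ] H) = HA V A) ∧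
    (∀ A B : Finset (Fin n), A ≠ B → HA V A ≤ (HA V B)ᗮ) ∧
    (⨆ A : Finset (Fin n), HA V A) = ⊤ ∧
    (∀ (A : Finset (Fin n)) (i : Fin n), Reduces (V i) (HA V A)) ∧
    (∀ A : Finset (Fin n), ∀ i ∈ A, PureOn (V i) (HA V A)) ∧
    (∀ A : Finset (Fin n), ∀ i ∉ A, UnitaryOn (V i) (HA V A)) ∧
    (∀ L : Submodule ℂ H, IsClosed (L : Set H) → (∀ i, Reduces (V i) L) →
      ∀ A : Finset (Fin n), ∀ PL : H →L[ℂ] H, IsOrthoProj PL L →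
        [(∀ i ∈ A, PureOn (V i) L) ∧ ∀ i ∉ A, UnitaryOn (V i) L,
          L ≤ HA V A,
          PL * PA Piso Puni A = PL].TFAE) :=
  statement11_general z hz1 V hV Piso Puni hPiso hPuni
end
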